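/- arXiv:2504.02319 — 3 statements merged into one kernel-verified Lean document; each statement's English description precedes it below -/
import Mathlib

section
/- Let m ≡ 2 (mod 3) be an odd positive integer such that d = 9m^2 + 2m is square-free. Then d is congruent to 2 or 3 mod 4 and d is not of the form p, 2p₁, or p₁p₂ with p prime and p₁ ≡ p₂ ≡ 3 (mod 4) primes; consequently the class number of Q(√(9m²+2m)) is even. -/
/-!
Put `d = m (9m + 2)`. As `m` is odd, `d ≡ 3 (mod 4)`, so every element of `𝓞 K` has the form
`x + y √d` with `x, y ∈ ℤ`, and `m`, `9m + 2` are coprime, so the ideal `I = (m, √d)` satisfies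
`I² = (m)`. If `I = (β)`, then `x² - d y² = ±m` with `m ∣ x`, i.e. `m u² - (9m + 2) y² = ±1`.
Multiplying `m u + y √d` by the unit `(9m + 1) - 3 √d` of norm `1` strictly decreases `|y|`,
so descent reaches `y = 0`, where `m u² = ±1` is absurd. Hence the class of `I` has order `2`.
-/

open Module NumberField
open scoped nonZeroDivisors

theorem mul_sq_sub_mul_sq_invariant {m u y e : ℤ} (h : m * u ^ 2 - (9 * m + 2) * y ^ 2 = e) :
    m * ((9 * m + 1) * u - 3 * (9 * m + 2) * y) ^ 2 -
      (9 * m + 2) * ((9 * m + 1) * y - 3 * m * u) ^ 2 = e := by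
  linear_combination h

theorem abs_nine_mul_add_one_mul_sub_lt {m u y e : ℤ} (hm : 0 < m) (he : |e| ≤ 1) (hu : 0 ≤ u)
    (hy : 0 < y) (h : m * u ^ 2 - (9 * m + 2) * y ^ 2 = e) :
    |(9 * m + 1) * y - 3 * m * u| < y := by
  obtain ⟨he₁, he₂⟩ := abs_le.mp he
  have hy2 : 1 ≤ y ^ 2 := by nlinarith
  have h3yu : 3 * y < u := by
    refine lt_of_pow_lt_pow_left₀ 2 hu ?_
    nlinarith
  have hmu : 3 * m * u < (9 * m + 2) * y := by
    refine lt_of_pow_lt_pow_left₀ 2 (by positivity) ?_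
    have : ((9 * m + 2) * y) ^ 2 - (3 * m * u) ^ 2 = 2 * (9 * m + 2) * y ^ 2 - 9 * (m * e) := by
      linear_combination (-9 * m) * h
    nlinarith
  rw [abs_lt]
  constructor <;> nlinarith

theorem mul_sq_sub_mul_sq_ne {m e : ℤ} (hm : 2 ≤ m) (he : |e| = 1) (u y : ℤ) :
    m * u ^ 2 - (9 * m + 2) * y ^ 2 ≠ e := fun h => by
  rcases eq_or_ne y 0 with rfl | hy
  · have hmu : IsUnit m := isUnit_of_dvd_unit ⟨u ^ 2, by linarith⟩ (Int.isUnit_iff_abs_eq.mpr he)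
    rcases Int.isUnit_iff.mp hmu with rfl | rfl <;> omega
  · have h' : m * |u| ^ 2 - (9 * m + 2) * |y| ^ 2 = e := by rwa [sq_abs, sq_abs]
    have hlt := abs_nine_mul_add_one_mul_sub_lt (by omega) he.le (abs_nonneg u) (abs_pos.mpr hy) h'
    exact mul_sq_sub_mul_sq_ne hm he _ _ (mul_sq_sub_mul_sq_invariant h')
termination_by y.natAbs
decreasing_by exact Int.natAbs_lt_iff_sq_lt.mpr (sq_lt_sq.mpr hlt)

theorem abs_sq_sub_mul_sq_ne {m : ℤ} (hm : 2 ≤ m) (hsf : Squarefree m) (x y : ℤ) :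
    |x ^ 2 - m * (9 * m + 2) * y ^ 2| ≠ m := fun h => by
  have hx : m ∣ x ^ 2 := by
    have h₁ : m ∣ x ^ 2 - m * (9 * m + 2) * y ^ 2 := by rw [← dvd_abs, h]
    simpa using dvd_add h₁ (⟨(9 * m + 2) * y ^ 2, by ring⟩ : m ∣ m * (9 * m + 2) * y ^ 2)
  obtain ⟨u, rfl⟩ := (hsf.dvd_pow_iff_dvd two_ne_zero).mp hx
  have hu : |m * u ^ 2 - (9 * m + 2) * y ^ 2| = 1 := by
    rw [show (m * u) ^ 2 - m * (9 * m + 2) * y ^ 2 = m * (m * u ^ 2 - (9 * m + 2) * y ^ 2) by ring,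
      abs_mul, abs_of_pos (by omega : 0 < m)] at h
    exact mul_left_cancel₀ (by omega : m ≠ 0) (h.trans (mul_one m).symm)
  exact mul_sq_sub_mul_sq_ne hm hu u y rfl

theorem Rat.exists_intCast_eq_of_squarefree_mul_sq {d : ℤ} (hd : Squarefree d) {q : ℚ} {n : ℤ}
    (h : d * q ^ 2 = n) : ∃ z : ℤ, (z : ℚ) = q := by
  have hnum : d * q.num ^ 2 = n * (q.den : ℤ) ^ 2 := by
    have : (d : ℚ) * (q * q.den) ^ 2 = n * (q.den : ℚ) ^ 2 := by rw [← h]; ring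
    exact_mod_cast Rat.mul_den_eq_num q ▸ this
  have hcop : IsCoprime ((q.den : ℤ) ^ 2) (q.num ^ 2) :=
    (Int.isCoprime_iff_nat_coprime.mpr (by simpa using q.reduced.symm)).pow
  have hden : IsUnit (q.den : ℤ) :=
    hd _ (sq (q.den : ℤ) ▸ hcop.dvd_of_dvd_mul_right ⟨n, by rw [hnum, mul_comm]⟩)
  refine ⟨q.num, Rat.coe_int_num_of_den_eq_one ?_⟩
  simpa [Int.isUnit_iff_natAbs_eq] using hden

theorem Rat.sq_ne_natCast_of_squarefree {d : ℕ} (hd : Squarefree d) (hd1 : d ≠ 1) (r : ℚ) :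
    r ^ 2 ≠ d := fun hr => by
  obtain ⟨s, hs⟩ := Rat.isSquare_natCast_iff.mp ⟨r, by rw [← sq, hr]⟩
  have hs1 : s = 1 := Nat.isUnit_iff.mp (hd s (hs ▸ dvd_rfl))
  exact hd1 (by rw [hs, hs1])

theorem Int.two_dvd_of_four_dvd_sq_sub_mul_sq {d X Y : ℤ} (hd : d % 4 = 3)
    (h : 4 ∣ X ^ 2 - d * Y ^ 2) : 2 ∣ X ∧ 2 ∣ Y := by
  have key : ∀ x y : ZMod 4, x ^ 2 - 3 * y ^ 2 = 0 → x ^ 2 = 0 ∧ y ^ 2 = 0 := by decide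
  have hd' : (d : ZMod 4) = 3 := by
    rw [← ZMod.intCast_mod, Nat.cast_ofNat, hd]; rfl
  have h4 := (ZMod.intCast_zmod_eq_zero_iff_dvd _ 4).mpr h
  push_cast at h4
  rw [hd'] at h4
  obtain ⟨hX, hY⟩ := key _ _ h4
  have hX4 := (ZMod.intCast_zmod_eq_zero_iff_dvd (X ^ 2) 4).mp (by push_cast; exact hX)
  have hY4 := (ZMod.intCast_zmod_eq_zero_iff_dvd (Y ^ 2) 4).mp (by push_cast; exact hY)
  exact ⟨Int.prime_two.dvd_of_dvd_pow (dvd_trans ⟨2, rfl⟩ hX4),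
    Int.prime_two.dvd_of_dvd_pow (dvd_trans ⟨2, rfl⟩ hY4)⟩

theorem QuadraticAlgebra.algebra_norm_eq_norm {R : Type*} [CommRing R] {a b : R}
    (z : QuadraticAlgebra R a b) : Algebra.norm R z = z.norm := by
  rw [Algebra.norm_apply, ← det_toLinearMap_eq_norm]
  rfl

theorem nonempty_algEquiv_quadraticAlgebra {K : Type*} [Field K] [Algebra ℚ K]
    (hK : finrank ℚ K = 2) {d : ℚ} (hd : ∀ r : ℚ, r ^ 2 ≠ d) {α : K}
    (hα : α ^ 2 = algebraMap ℚ K d) : Nonempty (QuadraticAlgebra ℚ d 0 ≃ₐ[ℚ] K) := by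
  have : Fact (∀ r : ℚ, r ^ 2 ≠ d + 0 * r) := ⟨by simpa using hd⟩
  let φ : QuadraticAlgebra ℚ d 0 →ₐ[ℚ] K :=
    QuadraticAlgebra.lift ⟨α, by rw [← sq, hα, Algebra.algebraMap_eq_smul_one]; simp⟩
  have hinj : Function.Injective φ := φ.toRingHom.injective
  have : FiniteDimensional ℚ K := Module.finite_of_finrank_eq_succ hK
  have hsurj := (LinearMap.injective_iff_surjective_of_finrank_eq_finrank
    (by rw [QuadraticAlgebra.finrank_eq_two, hK]) (f := φ.toLinearMap)).mp hinj
  exact ⟨AlgEquiv.ofBijective φ ⟨hinj, hsurj⟩⟩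

theorem Ideal.span_pair_sq_eq_span_singleton {R : Type*} [CommRing R] {μ ν a : R}
    (ha : a * a = μ * ν) (hμν : IsCoprime μ ν) : Ideal.span {μ, a} ^ 2 = Ideal.span {μ} := by
  rw [sq, Ideal.span_pair_mul_span_pair]
  apply le_antisymm
  · simp only [Ideal.span_le, Set.insert_subset_iff, Set.singleton_subset_iff, SetLike.mem_coe,
      Ideal.mem_span_singleton, ha]
    exact ⟨dvd_mul_right μ μ, dvd_mul_right μ a, dvd_mul_left μ a, dvd_mul_right μ ν⟩
  · obtain ⟨u, v, huv⟩ := hμν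
    set J := Ideal.span {μ * μ, μ * a, a * μ, a * a}
    have hμμ : μ * μ ∈ J := Ideal.subset_span (by simp)
    have haa : a * a ∈ J := Ideal.subset_span (by simp)
    have hμ : u * (μ * μ) + v * (a * a) = μ := by linear_combination μ * huv + v * ha
    rw [Ideal.span_le, Set.singleton_subset_iff, SetLike.mem_coe, ← hμ]
    exact J.add_mem (J.mul_mem_left u hμμ) (J.mul_mem_left v haa)

theorem two_dvd_card_classGroup {R : Type*} [CommRing R] [IsDedekindDomain R]
    [Fintype (ClassGroup R)] {I : Ideal R} (hI : ¬ I.IsPrincipal) (hI2 : (I ^ 2).IsPrincipal) :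
    2 ∣ Fintype.card (ClassGroup R) := by
  have hI0 : I ∈ (Ideal R)⁰ := mem_nonZeroDivisors_of_ne_zero fun h => hI (h ▸ bot_isPrincipal)
  have hg : ClassGroup.mk0 ⟨I, hI0⟩ ≠ 1 := by rwa [Ne, ClassGroup.mk0_eq_one_iff]
  have hg2 : ClassGroup.mk0 ⟨I, hI0⟩ ^ 2 = 1 := by
    rw [← map_pow, ClassGroup.mk0_eq_one_iff]
    exact hI2
  have : Fact (Nat.Prime 2) := ⟨Nat.prime_two⟩
  exact orderOf_eq_prime hg2 hg ▸ orderOf_dvd_card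

theorem nine_mul_sq_add_two_mul_mod_four {m : ℕ} (hm : Odd m) :
    (9 * m ^ 2 + 2 * m) % 4 = 3 := by
  obtain ⟨k, rfl⟩ := hm
  have : 9 * (2 * k + 1) ^ 2 + 2 * (2 * k + 1) = 4 * (9 * k ^ 2 + 10 * k + 2) + 3 := by ring
  omega

section NumberField

variable {K : Type*} [Field K] [NumberField K]

theorem norm_sub_intCast_eq {d : ℚ} (e : QuadraticAlgebra ℚ d 0 ≃ₐ[ℚ] K) (β : 𝓞 K) (k : ℤ) :
    (Algebra.norm ℤ (β - k) : ℚ) = ((e.symm β).re - k) ^ 2 - d * (e.symm β).im ^ 2 := by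
  rw [Algebra.coe_norm_int, ← Algebra.norm_eq_of_algEquiv e.symm,
    QuadraticAlgebra.algebra_norm_eq_norm, QuadraticAlgebra.norm_def]
  simp only [map_sub, map_intCast, QuadraticAlgebra.re_sub, QuadraticAlgebra.re_intCast, zero_mul,
    QuadraticAlgebra.im_sub, QuadraticAlgebra.im_intCast, sub_zero, add_zero]
  ring

theorem exists_four_mul_norm_eq {d : ℤ} (hd : Squarefree d) (e : QuadraticAlgebra ℚ d 0 ≃ₐ[ℚ] K)
    (β : 𝓞 K) : ∃ X Y : ℤ, 4 * Algebra.norm ℤ β = X ^ 2 - d * Y ^ 2 := by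
  set N := Algebra.norm ℤ β
  -- twice the rational part of `β` is the integer `N(β) - N(β - 1) + 1`
  set X := N - Algebra.norm ℤ (β - 1) + 1
  have h0 := norm_sub_intCast_eq e β 0
  have h1 := norm_sub_intCast_eq e β 1
  simp only [Int.cast_zero, sub_zero, Int.cast_one] at h0 h1
  have hX : (X : ℚ) = 2 * (e.symm β).re := by
    simp only [X]; push_cast; rw [h0, h1]; ring
  obtain ⟨Y, hY⟩ := Rat.exists_intCast_eq_of_squarefree_mul_sq hd
    (q := 2 * (e.symm β).im) (n := X ^ 2 - 4 * N) (by push_cast; rw [hX, h0]; ring)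
  refine ⟨X, Y, ?_⟩
  exact_mod_cast (show (4 * N : ℚ) = X ^ 2 - d * Y ^ 2 by rw [hX, hY, h0]; ring)

theorem exists_norm_eq_sq_sub_mul_sq {d : ℤ} (hd : Squarefree d) (hd4 : d % 4 = 3)
    (e : QuadraticAlgebra ℚ d 0 ≃ₐ[ℚ] K) (β : 𝓞 K) :
    ∃ x y : ℤ, Algebra.norm ℤ β = x ^ 2 - d * y ^ 2 := by
  obtain ⟨X, Y, h⟩ := exists_four_mul_norm_eq hd e β
  obtain ⟨⟨x, rfl⟩, ⟨y, rfl⟩⟩ := Int.two_dvd_of_four_dvd_sq_sub_mul_sq hd4 ⟨_, h.symm⟩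
  exact ⟨x, y, by linarith⟩

theorem absNorm_eq_of_sq_eq_span_natCast (hK : finrank ℚ K = 2) {I : Ideal (𝓞 K)} {n : ℕ}
    (h : I ^ 2 = Ideal.span {(n : 𝓞 K)}) : Ideal.absNorm I = n := by
  have := congrArg Ideal.absNorm h
  rw [map_pow, Ideal.absNorm_span_natCast, RingOfIntegers.rank, hK] at this
  exact Nat.pow_left_injective two_ne_zero this

theorem not_isPrincipal_span_pair (hK : finrank ℚ K = 2) {m : ℕ} (hm : 2 ≤ m) (hodd : Odd m)
    (hsf : Squarefree (9 * m ^ 2 + 2 * m))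
    (e : QuadraticAlgebra ℚ ((9 * m ^ 2 + 2 * m : ℕ) : ℤ) 0 ≃ₐ[ℚ] K) {a : 𝓞 K}
    (hI2 : Ideal.span {(m : 𝓞 K), a} ^ 2 = Ideal.span {(m : 𝓞 K)}) :
    ¬ (Ideal.span {(m : 𝓞 K), a}).IsPrincipal := by
  rintro ⟨β, hβ⟩
  have hN := absNorm_eq_of_sq_eq_span_natCast hK hI2
  rw [hβ, Ideal.submodule_span_eq, Ideal.absNorm_span_singleton] at hN
  obtain ⟨x, y, hxy⟩ := exists_norm_eq_sq_sub_mul_sq (Int.squarefree_natCast.mpr hsf)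
    (by exact_mod_cast nine_mul_sq_add_two_mul_mod_four hodd) e β
  refine abs_sq_sub_mul_sq_ne (m := m) (by omega)
    (Int.squarefree_natCast.mpr (hsf.squarefree_of_dvd ⟨9 * m + 2, by ring⟩)) x y ?_
  have : x ^ 2 - m * (9 * m + 2) * y ^ 2 = Algebra.norm ℤ β := by
    rw [hxy]
    push_cast
    ring
  rw [this, Int.abs_eq_natAbs, hN]

theorem even_classNumber (hK : finrank ℚ K = 2) {m : ℕ} (hm : 2 ≤ m) (hodd : Odd m)
    (hsf : Squarefree (9 * m ^ 2 + 2 * m)) {α : K} (hα : α ^ 2 = (9 * m ^ 2 + 2 * m : ℕ)) :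
    Even (classNumber K) := by
  have hd : ∀ r : ℚ, r ^ 2 ≠ (((9 * m ^ 2 + 2 * m : ℕ) : ℤ) : ℚ) := by
    simpa using Rat.sq_ne_natCast_of_squarefree hsf (by nlinarith)
  obtain ⟨e⟩ := nonempty_algEquiv_quadraticAlgebra hK hd (α := α) (by rw [hα]; simp)
  let a : 𝓞 K := ⟨α, IsIntegral.of_pow two_pos (hα ▸ isIntegral_natCast _)⟩
  have ha : a * a = (m : 𝓞 K) * ((9 * m + 2 : ℕ) : 𝓞 K) := by
    apply RingOfIntegers.coe_injective
    rw [map_mul, map_mul, map_natCast, map_natCast, ← sq]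
    change α ^ 2 = _
    rw [hα]
    push_cast
    ring
  have hcop : IsCoprime (m : 𝓞 K) ((9 * m + 2 : ℕ) : 𝓞 K) := by
    have : Nat.Coprime m (9 * m + 2) := by
      rwa [add_comm, Nat.coprime_add_mul_right_right, Nat.coprime_two_right]
    simpa using (Nat.isCoprime_iff_coprime.mpr this).map (Int.castRingHom (𝓞 K))
  have hI2 := Ideal.span_pair_sq_eq_span_singleton ha hcop
  exact even_iff_two_dvd.mpr <| two_dvd_card_classGroup
    (not_isPrincipal_span_pair hK hm hodd hsf e hI2) (hI2 ▸ ⟨⟨_, rfl⟩⟩)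

end NumberField

theorem class_number_even_general (m : ℕ) (hm2 : Odd m) (hm3 : m % 3 = 2)
    (hsf : Squarefree (9 * m ^ 2 + 2 * m))
    (K : Type) [Field K] [NumberField K]
    (hdeg : Module.finrank ℚ K = 2)
    (α : K) (hα : α ^ 2 = (9 * m ^ 2 + 2 * m : ℕ)) :
    ((9 * m ^ 2 + 2 * m) % 4 = 2 ∨ (9 * m ^ 2 + 2 * m) % 4 = 3) ∧
    (¬ ∃ p : ℕ, p.Prime ∧ 9 * m ^ 2 + 2 * m = p) ∧
    (¬ ∃ p₁ : ℕ, p₁.Prime ∧ p₁ % 4 = 3 ∧ 9 * m ^ 2 + 2 * m = 2 * p₁) ∧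
    (¬ ∃ p₁ p₂ : ℕ, p₁.Prime ∧ p₂.Prime ∧ p₁ % 4 = 3 ∧ p₂ % 4 = 3 ∧
      9 * m ^ 2 + 2 * m = p₁ * p₂) ∧
    Even (classNumber K) := by
  have hm : 2 ≤ m := by omega
  have hd4 := nine_mul_sq_add_two_mul_mod_four hm2
  refine ⟨Or.inr hd4, ?_, ?_, ?_, even_classNumber hdeg hm hm2 hsf hα⟩
  · rintro ⟨p, hp, hpd⟩
    rw [show 9 * m ^ 2 + 2 * m = m * (9 * m + 2) by ring] at hpd
    exact Nat.not_prime_mul (by omega) (by omega) (hpd ▸ hp)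
  · rintro ⟨p, -, -, hpd⟩
    omega
  · rintro ⟨p₁, p₂, -, -, h₁, h₂, hpd⟩
    rw [hpd, Nat.mul_mod, h₁, h₂] at hd4
    omega

theorem class_number_even (m : ℕ) (hm : 0 < m) (hm2 : Odd m) (hm3 : m % 3 = 2)
    (hsf : Squarefree (9 * m ^ 2 + 2 * m))
    (K : Type) [Field K] [NumberField K]
    (hdeg : Module.finrank ℚ K = 2)
    (α : K) (hα : α ^ 2 = (9 * m ^ 2 + 2 * m : ℕ)) :
    ((9 * m ^ 2 + 2 * m) % 4 = 2 ∨ (9 * m ^ 2 + 2 * m) % 4 = 3) ∧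
    (¬ ∃ p : ℕ, p.Prime ∧ 9 * m ^ 2 + 2 * m = p) ∧
    (¬ ∃ p₁ : ℕ, p₁.Prime ∧ p₁ % 4 = 3 ∧ 9 * m ^ 2 + 2 * m = 2 * p₁) ∧
    (¬ ∃ p₁ p₂ : ℕ, p₁.Prime ∧ p₂.Prime ∧ p₁ % 4 = 3 ∧ p₂ % 4 = 3 ∧
      9 * m ^ 2 + 2 * m = p₁ * p₂) ∧
    Even (classNumber K) :=
  class_number_even_general m hm2 hm3 hsf K hdeg α hα
end

section
/- Let m be a positive integer and p ≥ 5 a prime dividing m. Then (12m³ + 4m² + 113m + 1)·p² ≠ 108m³ + 36m² + 27p⁴m + 30p²m + 9p⁴; i.e., the ideal classes B and C in k_m have distinct partial zeta values at −1. -/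
/-!
Clearing denominators, equality means that a cubic in `m` vanishes. Since `p ∣ m`, either
`m ≤ p`, where the cubic is negative, or `m ≥ 2p`, where its leading term dominates once `p ≥ 5`.
-/

/-- `p² · 180 · (ζ(-1, B) - ζ(-1, C))`, written as a cubic in `m`. -/
def zetaDiff (p m : ℤ) : ℤ :=
  12 * (p ^ 2 - 9) * m ^ 3 + 4 * (p ^ 2 - 9) * m ^ 2 - p ^ 2 * (27 * p ^ 2 - 83) * m -
    p ^ 2 * (9 * p ^ 2 - 1)

lemma zetaDiff_neg_of_le {p m : ℤ} (hp : 3 ≤ p) (hm₀ : 0 ≤ m) (hmp : m ≤ p) :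
    zetaDiff p m < 0 := by
  have hp₉ : 0 ≤ p ^ 2 - 9 := by nlinarith
  have hm₂ : m ^ 2 ≤ p * m := by nlinarith
  have hm₃ : m ^ 3 ≤ p ^ 2 * m := by nlinarith
  have hcubic := mul_le_mul_of_nonneg_left hm₃ hp₉
  have hquad := mul_le_mul_of_nonneg_left hm₂ hp₉
  have hquartic : 0 ≤ p ^ 3 * (15 * p - 4) := mul_nonneg (by positivity) (by linarith)
  have hlin : 0 ≤ m * (p ^ 3 * (15 * p - 4) + 25 * p ^ 2 + 36 * p) :=
    mul_nonneg hm₀ (by positivity)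
  have hconst : 0 < p ^ 2 * (9 * p ^ 2 - 1) := mul_pos (by positivity) (by nlinarith)
  unfold zetaDiff
  linarith

lemma zetaDiff_pos_of_two_mul_le {p m : ℤ} (hp : 5 ≤ p) (hm : 2 * p ≤ m) :
    0 < zetaDiff p m := by
  have hp₉ : 0 ≤ p ^ 2 - 9 := by nlinarith
  have hm₂ : 4 * p ^ 2 ≤ m ^ 2 := by nlinarith
  have hm₃ : 4 * p ^ 2 * m ≤ m ^ 3 := by
    simpa [pow_succ] using mul_le_mul_of_nonneg_right hm₂ (by linarith : (0 : ℤ) ≤ m)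
  have hcubic := mul_le_mul_of_nonneg_left hm₃ hp₉
  have hquad : 0 ≤ (p ^ 2 - 9) * m ^ 2 := by positivity
  have hp₂ : 25 ≤ p ^ 2 := by nlinarith
  have hm₁₀ := mul_le_mul_of_nonneg_left (by linarith : (10 : ℤ) ≤ m)
    (by linarith : 0 ≤ 21 * p ^ 2 - 349)
  have hrest : 0 < p ^ 2 * ((21 * p ^ 2 - 349) * m - 9 * p ^ 2 + 1) :=
    mul_pos (by positivity) (by linarith)
  unfold zetaDiff
  linarith

theorem B_ne_C_general (m p : ℕ) (hp5 : 5 ≤ p) (hpm : p ∣ m) :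
    (12 * m ^ 3 + 4 * m ^ 2 + 113 * m + 1) * p ^ 2 ≠
      108 * m ^ 3 + 36 * m ^ 2 + 27 * p ^ 4 * m + 30 * p ^ 2 * m + 9 * p ^ 4 := by
  intro h
  have hzero : zetaDiff p m = 0 := by
    have hZ := congrArg (Nat.cast : ℕ → ℤ) h
    push_cast at hZ
    unfold zetaDiff
    linear_combination hZ
  obtain ⟨k, rfl⟩ := hpm
  have hp : (5 : ℤ) ≤ p := by exact_mod_cast hp5
  push_cast at hzero
  rcases le_or_gt k 1 with hk | hk
  · have hkp : (p : ℤ) * k ≤ p := by nlinarith [show (k : ℤ) ≤ 1 by exact_mod_cast hk]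
    exact (zetaDiff_neg_of_le (by linarith) (by positivity) hkp).ne hzero
  · have hkp : 2 * (p : ℤ) ≤ p * k := by nlinarith [show (2 : ℤ) ≤ k by exact_mod_cast hk]
    exact (zetaDiff_pos_of_two_mul_le hp hkp).ne' hzero

theorem B_ne_C (m p : ℕ) (hm : 0 < m) (hp : p.Prime) (hp5 : 5 ≤ p) (hpm : p ∣ m) :
    (12 * m ^ 3 + 4 * m ^ 2 + 113 * m + 1) * p ^ 2 ≠
      108 * m ^ 3 + 36 * m ^ 2 + 27 * p ^ 4 * m + 30 * p ^ 2 * m + 9 * p ^ 4 :=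
  B_ne_C_general m p hp5 hpm
end

section
/- Let m ≡ 2 (mod 3) be an odd positive integer with d = 9m² + 2m square-free. Then the fundamental unit of Q(√d) is ε = 9m + 1 + 3√d, with norm N(ε) = 1. -/
/-!
Since `d = 9m² + 2m` is squarefree and `≡ 3 (mod 4)`, the ring of integers of `K = ℚ(√d)` is
`ℤ[√d]`: an integer `a + b√d` (`a, b ∈ ℚ`) has trace `2a ∈ ℤ` and norm `a² - d b² ∈ ℤ`, so
`d (2b)² ∈ ℤ` forces `2b ∈ ℤ`, and then `(2a)² - d (2b)² ≡ 0 (mod 4)` forces `2a` and `2b` to be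
even. Norm `-1` is impossible modulo 4, so the units are exactly `±` the solutions of
`x² - d y² = 1`. Among these, `y = 1, 2` would put `d + 1` strictly between `(3m)²` and
`(3m+1)²`, resp. `4d + 1` between `(6m)²` and `(6m+1)²`, so `(9m + 1, 3)` is the fundamental
solution.
-/

open NumberField

theorem Rat.exists_intCast_eq_of_squarefree_mul_sq_s19 {c k : ℤ} (hc : Squarefree c) {s : ℚ}
    (h : c * s ^ 2 = k) : ∃ j : ℤ, s = j := by
  have hnum : c * s.num ^ 2 = k * (s.den : ℤ) ^ 2 := by
    have : (c : ℚ) * s.num ^ 2 = k * s.den ^ 2 := by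
      rw [← Rat.mul_den_eq_num, ← h]; ring
    exact_mod_cast this
  have hcop : IsCoprime ((s.den : ℤ) ^ 2) (s.num ^ 2) := (Rat.isCoprime_num_den s).symm.pow
  have hden : IsUnit (s.den : ℤ) := hc _ <| by
    rw [← sq]; exact hcop.dvd_of_dvd_mul_right ⟨k, by rw [hnum, mul_comm]⟩
  refine ⟨s.num, ((Rat.den_eq_one_iff s).mp ?_).symm⟩
  have := Int.isUnit_iff.mp hden
  omega

namespace Int

theorem not_isSquare_of_squarefree {d : ℤ} (hsf : Squarefree d) (hd : d ≠ 1) : ¬IsSquare d := by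
  rintro ⟨r, rfl⟩
  rcases Int.isUnit_iff.mp (hsf r dvd_rfl) with rfl | rfl <;> simp at hd

theorem not_exists_sq' {m n : ℤ} (hm : 0 ≤ m) (hl : m ^ 2 < n) (hr : n < (m + 1) ^ 2) :
    ¬∃ t, t ^ 2 = n := by
  rintro ⟨t, rfl⟩
  rw [← sq_abs t] at hl hr
  have := lt_of_pow_lt_pow_left₀ 2 (abs_nonneg t) hl
  have := lt_of_pow_lt_pow_left₀ 2 (by omega) hr
  omega

theorem two_dvd_of_sq_sub_mul_sq_eq {d t b n : ℤ} (hd : d % 4 = 2 ∨ d % 4 = 3)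
    (h : t ^ 2 - d * b ^ 2 = 4 * n) : 2 ∣ t ∧ 2 ∣ b := by
  obtain ⟨q, r, rfl, hr⟩ : ∃ q r, d = 4 * q + r ∧ (r = 2 ∨ r = 3) :=
    ⟨d / 4, d % 4, by omega, hd⟩
  have hmod : ∀ T B Q R N : ZMod 4, (R = 2 ∨ R = 3) → T ^ 2 - (4 * Q + R) * B ^ 2 = 4 * N →
      2 * T = 0 ∧ 2 * B = 0 := by
    decide
  have hR : (r : ZMod 4) = 2 ∨ (r : ZMod 4) = 3 := by rcases hr with rfl | rfl <;> simp
  obtain ⟨ht, hb⟩ := hmod t b q r n hR (by exact_mod_cast congrArg (Int.cast : ℤ → ZMod 4) h)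
  have ht' := (ZMod.intCast_zmod_eq_zero_iff_dvd (2 * t) 4).mp (by push_cast; exact ht)
  have hb' := (ZMod.intCast_zmod_eq_zero_iff_dvd (2 * b) 4).mp (by push_cast; exact hb)
  omega

end Int

namespace Zsqrtd

theorem norm_ne_neg_one_of_emod_four_eq_three {d : ℤ} (hd : d % 4 = 3) (z : ℤ√d) :
    z.norm ≠ -1 := by
  obtain ⟨q, rfl⟩ : ∃ q, d = 4 * q + 3 := ⟨d / 4, by omega⟩
  intro h
  have h4 := congrArg (Int.cast : ℤ → ZMod 4) h
  simp only [norm_def] at h4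
  push_cast at h4
  generalize (z.re : ZMod 4) = a, (z.im : ZMod 4) = b, (q : ZMod 4) = c at h4
  revert a b c
  decide

end Zsqrtd

namespace Pell

def Solution₁.toUnits {d : ℤ} : Solution₁ d →* (ℤ√d)ˣ := Unitary.toUnits

theorem Solution₁.toUnits_neg {d : ℤ} (s : Solution₁ d) : toUnits (-s) = -toUnits s := rfl

theorem IsFundamental.units_eq_zpow_or_neg_zpow {d : ℤ} {s : Solution₁ d} (hs : IsFundamental s)
    (hd : ∀ z : ℤ√d, z.norm ≠ -1) (u : (ℤ√d)ˣ) :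
    ∃ n : ℤ, u = s.toUnits ^ n ∨ u = -s.toUnits ^ n := by
  have hnorm : (u : ℤ√d).norm = 1 := by
    rcases Int.isUnit_iff.mp ((Zsqrtd.isUnit_iff_norm_isUnit _).mp u.isUnit) with h | h
    · exact h
    · exact absurd h (hd u)
  obtain ⟨n, hn | hn⟩ := hs.eq_zpow_or_neg_zpow ⟨u, Zsqrtd.norm_eq_one_iff_mem_unitary.mp hnorm⟩
  · exact ⟨n, .inl (by rw [← map_zpow, ← hn]; exact Units.ext rfl)⟩
  · exact ⟨n, .inr (by rw [← map_zpow, ← Solution₁.toUnits_neg, ← hn]; exact Units.ext rfl)⟩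

def richaudDegertSolution (M : ℤ) : Solution₁ (9 * M ^ 2 + 2 * M) :=
  Solution₁.mk (9 * M + 1) 3 (by ring)

theorem isFundamental_richaudDegertSolution {M : ℤ} (hM : 0 < M) :
    IsFundamental (richaudDegertSolution M) := by
  refine ⟨by simp [richaudDegertSolution]; omega, by simp [richaudDegertSolution],
    fun {b} hb => ?_⟩
  simp only [richaudDegertSolution, Solution₁.x_mk]
  have hx := b.prop_x
  have hy := abs_pos.mpr (Solution₁.y_ne_zero_of_one_lt_x hb)
  rcases (by omega : |b.y| = 1 ∨ |b.y| = 2 ∨ 3 ≤ |b.y|) with h | h | h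
  · rw [← sq_abs b.y, h] at hx
    exact absurd ⟨b.x, hx⟩
      (Int.not_exists_sq' (m := 3 * M) (by omega) (by nlinarith) (by nlinarith))
  · rw [← sq_abs b.y, h] at hx
    exact absurd ⟨b.x, hx⟩
      (Int.not_exists_sq' (m := 6 * M) (by omega) (by nlinarith) (by nlinarith))
  · refine le_of_pow_le_pow_left₀ two_ne_zero (by omega) ?_
    have h9 : 3 ^ 2 ≤ |b.y| ^ 2 := pow_le_pow_left₀ (by norm_num) h 2
    rw [hx, ← sq_abs b.y]
    nlinarith [mul_le_mul_of_nonneg_left h9 (by positivity : 0 ≤ 9 * M ^ 2 + 2 * M)]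

end Pell

section QuadraticField

variable {K : Type*} [Field K] [CharZero K] {d : ℚ} {A : K}

theorem linearIndependent_one_of_sq_eq (hd : ¬IsSquare d) (hA : A ^ 2 = d) :
    LinearIndependent ℚ ![1, A] := by
  rw [LinearIndependent.pair_iff' one_ne_zero]
  rintro q rfl
  rw [Rat.smul_one_eq_cast, ← Rat.cast_pow] at hA
  exact hd ⟨q, (Rat.cast_injective hA).symm.trans (sq q)⟩

variable (hK : Module.finrank ℚ K = 2) (hd : ¬IsSquare d) (hA : A ^ 2 = d)

noncomputable def sqrtBasis : Module.Basis (Fin 2) ℚ K :=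
  basisOfLinearIndependentOfCardEqFinrank (linearIndependent_one_of_sq_eq hd hA) (by simp [hK])

theorem coe_sqrtBasis : ⇑(sqrtBasis hK hd hA) = ![1, A] :=
  coe_basisOfLinearIndependentOfCardEqFinrank _ _

include hK hd hA in
theorem exists_eq_ratCast_add_mul_of_sq_eq (x : K) : ∃ a b : ℚ, x = a + b * A := by
  set B := sqrtBasis hK hd hA
  refine ⟨B.repr x 0, B.repr x 1, ?_⟩
  conv_lhs => rw [← B.sum_repr x]
  simp [B, coe_sqrtBasis, Fin.sum_univ_two, Algebra.smul_def]

theorem leftMulMatrix_sqrtBasis (a b : ℚ) :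
    Algebra.leftMulMatrix (sqrtBasis hK hd hA) ((a : K) + b * A) = !![a, d * b; b, a] := by
  set B := sqrtBasis hK hd hA
  have h0 : ((a : K) + b * A) * B 0 = a • B 0 + b • B 1 := by
    simp [B, coe_sqrtBasis, Algebra.smul_def]
  have h1 : ((a : K) + b * A) * B 1 = (d * b) • B 0 + a • B 1 := by
    simp [B, coe_sqrtBasis, Algebra.smul_def]
    linear_combination (b : K) * hA
  ext i j
  rw [Algebra.leftMulMatrix_eq_repr_mul]
  fin_cases i <;> fin_cases j <;> simp [h0, h1]

include hK hd hA in
theorem trace_ratCast_add_mul_of_sq_eq (a b : ℚ) : Algebra.trace ℚ K (a + b * A) = 2 * a := by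
  rw [Algebra.trace_eq_matrix_trace (sqrtBasis hK hd hA), leftMulMatrix_sqrtBasis,
    Matrix.trace_fin_two_of, two_mul]

include hK hd hA in
theorem norm_ratCast_add_mul_of_sq_eq (a b : ℚ) :
    Algebra.norm ℚ ((a : K) + b * A) = a ^ 2 - d * b ^ 2 := by
  rw [Algebra.norm_eq_matrix_det (sqrtBasis hK hd hA), leftMulMatrix_sqrtBasis,
    Matrix.det_fin_two_of]
  ring

end QuadraticField

namespace NumberField.RingOfIntegers

variable {K : Type*} [Field K] {d : ℤ} {α : 𝓞 K}

theorem coe_sq_eq_of_mul_self_eq (hα : α * α = d) : (α : K) ^ 2 = ((d : ℚ) : K) := by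
  rw [sq, ← map_mul, hα]; simp

variable [NumberField K]

theorem norm_lift (hK : Module.finrank ℚ K = 2) (hd : ¬IsSquare d) (hα : α * α = d) (z : ℤ√d) :
    Algebra.norm ℤ (Zsqrtd.lift ⟨α, hα⟩ z) = z.norm := by
  have hd' : ¬IsSquare (d : ℚ) := by rwa [Rat.isSquare_intCast_iff]
  have hnorm := norm_ratCast_add_mul_of_sq_eq hK hd' (coe_sq_eq_of_mul_self_eq hα) z.re z.im
  push_cast at hnorm
  have hℚ : (Algebra.norm ℤ (Zsqrtd.lift ⟨α, hα⟩ z) : ℚ) = z.norm := by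
    rw [Algebra.coe_norm_int, Zsqrtd.lift_apply_apply]
    simp only [map_add, map_intCast, map_mul]
    rw [hnorm, Zsqrtd.norm_def]
    push_cast
    ring
  exact_mod_cast hℚ

theorem lift_bijective (hK : Module.finrank ℚ K = 2) (hsf : Squarefree d)
    (hd : d % 4 = 2 ∨ d % 4 = 3) (hα : α * α = d) :
    Function.Bijective (Zsqrtd.lift ⟨α, hα⟩) := by
  have hnsq : ¬IsSquare d := Int.not_isSquare_of_squarefree hsf (by omega)
  refine ⟨Zsqrtd.lift_injective _ fun r hr => hnsq ⟨r, hr⟩, fun x => ?_⟩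
  have hd' : ¬IsSquare (d : ℚ) := by rwa [Rat.isSquare_intCast_iff]
  have hA := coe_sq_eq_of_mul_self_eq hα
  obtain ⟨a, b, hx⟩ := exists_eq_ratCast_add_mul_of_sq_eq hK hd' hA (x : K)
  have ht : (Algebra.trace ℤ (𝓞 K) x : ℚ) = 2 * a := by
    rw [Algebra.coe_trace_int, hx, trace_ratCast_add_mul_of_sq_eq hK hd' hA]
  have hn : (Algebra.norm ℤ x : ℚ) = a ^ 2 - d * b ^ 2 := by
    rw [Algebra.coe_norm_int, hx, norm_ratCast_add_mul_of_sq_eq hK hd' hA]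
  generalize Algebra.trace ℤ (𝓞 K) x = t at ht
  generalize Algebra.norm ℤ x = n at hn
  obtain ⟨c, hc⟩ := Rat.exists_intCast_eq_of_squarefree_mul_sq_s19 hsf (s := 2 * b)
    (k := t ^ 2 - 4 * n) (by push_cast; rw [ht, hn]; ring)
  have hdisc : t ^ 2 - d * c ^ 2 = 4 * n := by
    have : ((t ^ 2 - d * c ^ 2 : ℤ) : ℚ) = 4 * n := by push_cast; rw [ht, hn, ← hc]; ring
    exact_mod_cast this
  obtain ⟨⟨a₀, rfl⟩, ⟨b₀, rfl⟩⟩ := Int.two_dvd_of_sq_sub_mul_sq_eq hd hdisc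
  have ha : a = a₀ := by push_cast at ht; linarith
  have hb : b = b₀ := by push_cast at hc; linarith
  refine ⟨⟨a₀, b₀⟩, RingOfIntegers.ext ?_⟩
  simp only [Zsqrtd.lift_apply_apply, map_add, map_intCast, map_mul, hx, ha, hb, Rat.cast_intCast]

end NumberField.RingOfIntegers

theorem fundamental_unit_eq_general (m : ℕ) (hm2 : Odd m)
    (hsf : Squarefree (9 * m ^ 2 + 2 * m))
    (K : Type) [Field K] [NumberField K]
    (hdeg : Module.finrank ℚ K = 2)
    (α : 𝓞 K) (hα : α ^ 2 = (9 * m ^ 2 + 2 * m : ℕ)) :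
    ∃ ε : (𝓞 K)ˣ, (ε : 𝓞 K) = (9 * m + 1 : ℕ) + 3 * α ∧
      Algebra.norm ℤ ((ε : 𝓞 K)) = 1 ∧
      ∀ u : (𝓞 K)ˣ, ∃ n : ℤ, u = ε ^ n ∨ u = -ε ^ n := by
  have hm : 0 < (m : ℤ) := by have := hm2.pos; omega
  have hd : (9 * (m : ℤ) ^ 2 + 2 * m) % 4 = 3 := by
    obtain ⟨k, rfl⟩ := hm2; push_cast; ring_nf; omega
  have hsf' : Squarefree (9 * (m : ℤ) ^ 2 + 2 * m) := by
    simpa using Int.squarefree_natCast.mpr hsf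
  have hα' : α * α = ((9 * (m : ℤ) ^ 2 + 2 * m : ℤ) : 𝓞 K) := by rw [← sq, hα]; push_cast; rfl
  set φ := Zsqrtd.lift ⟨α, hα'⟩
  set e := RingEquiv.ofBijective φ (RingOfIntegers.lift_bijective hdeg hsf' (.inr hd) hα')
  set s₀ := Pell.richaudDegertSolution m
  refine ⟨Units.map (φ : ℤ√_ →* 𝓞 K) s₀.toUnits, ?_, ?_, fun u => ?_⟩
  · change φ ⟨9 * m + 1, 3⟩ = _
    simp [φ]
  · rw [Units.coe_map, MonoidHom.coe_coe,
      RingOfIntegers.norm_lift hdeg (Int.not_isSquare_of_squarefree hsf' (by omega))]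
    exact Zsqrtd.norm_eq_one_iff_mem_unitary.mpr s₀.2
  · obtain ⟨n, h⟩ := (Pell.isFundamental_richaudDegertSolution hm).units_eq_zpow_or_neg_zpow
      (Zsqrtd.norm_ne_neg_one_of_emod_four_eq_three hd) (Units.map e.symm.toMonoidHom u)
    have hu : u = Units.map (φ : ℤ√_ →* 𝓞 K) (Units.map e.symm.toMonoidHom u) :=
      Units.ext (e.apply_symm_apply u).symm
    refine ⟨n, h.imp (fun h => ?_) (fun h => ?_)⟩
    · rw [hu, h, map_zpow]
    · rw [hu, h, Units.map_neg, map_zpow]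

theorem fundamental_unit_eq (m : ℕ) (hm : 0 < m) (hm2 : Odd m) (hm3 : m % 3 = 2)
    (hsf : Squarefree (9 * m ^ 2 + 2 * m))
    (K : Type) [Field K] [NumberField K]
    (hdeg : Module.finrank ℚ K = 2)
    (α : 𝓞 K) (hα : α ^ 2 = (9 * m ^ 2 + 2 * m : ℕ)) :
    ∃ ε : (𝓞 K)ˣ, (ε : 𝓞 K) = (9 * m + 1 : ℕ) + 3 * α ∧
      Algebra.norm ℤ ((ε : 𝓞 K)) = 1 ∧
      ∀ u : (𝓞 K)ˣ, ∃ n : ℤ, u = ε ^ n ∨ u = -ε ^ n :=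
  fundamental_unit_eq_general m hm2 hsf K hdeg α hα
end
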